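/- arXiv:2404.17796 — 2 statements merged into one kernel-verified Lean document; each statement's English description precedes it below -/
import Mathlib

section
/- For a convex continuous function f on [a,b], the remainder satisfies the a posteriori bound |R[Q_{2n}^{Tr}; f]| ≤ |Q_n^{Tr}[f] - Q_{2n}^{Tr}[f]|. -/
/-!
On each cell `[c, d]` of a grid a convex `f` lies below its chord and, by Jensen's inequality,
its mean value is at least its value at the midpoint (Hermite–Hadamard). Summing over the cells,
the midpoint rule `M_n` underestimates and every trapezium rule overestimates the integral `I`.
Since halving the step gives `Q_{2n} = (Q_n + M_n) / 2`, we get `M_n ≤ I ≤ Q_{2n} ≤ Q_n` and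
`0 ≤ Q_{2n} - I ≤ Q_{2n} - M_n = Q_n - Q_{2n}`.
-/

/-- Composite trapezium rule `Q_n^{Tr}[f]` on `[a,b]` with `n` subintervals. -/
noncomputable def trapRule (a b : ℝ) (n : ℕ) (f : ℝ → ℝ) : ℝ :=
  ((b - a) / n) * ∑ i ∈ Finset.range (n + 1),
    (if i = 0 ∨ i = n then (1 : ℝ) / 2 else 1) * f (a + i * ((b - a) / n))

open Set intervalIntegral MeasureTheory
open scoped Interval

theorem ConvexOn.intervalIntegral_le_trapezoid {f : ℝ → ℝ} {c d : ℝ} (hcd : c ≤ d)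
    (hconv : ConvexOn ℝ (Icc c d) f) (hcont : ContinuousOn f (Icc c d)) :
    ∫ x in c..d, f x ≤ (d - c) * ((f c + f d) / 2) := by
  have hsubst : ∫ x in c..d, f x = (d - c) * ∫ t in (0 : ℝ)..1, f (c + (d - c) * t) := by
    simp
  have hmaps : MapsTo (fun t => c + (d - c) * t) (Icc 0 1) (Icc c d) := fun t ht =>
    ⟨by nlinarith [ht.1], by nlinarith [ht.2]⟩
  have hchord : ∀ t ∈ Icc (0 : ℝ) 1, f (c + (d - c) * t) ≤ (1 - t) * f c + t * f d := by
    rintro t ⟨ht0, ht1⟩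
    calc f (c + (d - c) * t) = f ((1 - t) • c + t • d) := by simp only [smul_eq_mul]; ring_nf
      _ ≤ _ := hconv.2 (left_mem_Icc.2 hcd) (right_mem_Icc.2 hcd) (sub_nonneg.2 ht1) ht0
        (sub_add_cancel 1 t)
  have hchord_integral : ∫ t in (0 : ℝ)..1, ((1 - t) * f c + t * f d) = (f c + f d) / 2 := by
    rw [integral_add ((by fun_prop : Continuous _).intervalIntegrable _ _)
      ((by fun_prop : Continuous _).intervalIntegrable _ _), intervalIntegral.integral_mul_const,
      intervalIntegral.integral_mul_const, integral_sub intervalIntegrable_const intervalIntegrable_id]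
    norm_num
    ring
  rw [hsubst, ← hchord_integral]
  gcongr
  exact integral_mono_on zero_le_one
    ((hcont.comp (by fun_prop) hmaps).intervalIntegrable_of_Icc zero_le_one)
    ((by fun_prop : Continuous _).intervalIntegrable 0 1) hchord

theorem ConvexOn.midpoint_le_intervalIntegral {f : ℝ → ℝ} {c d : ℝ} (hcd : c ≤ d)
    (hconv : ConvexOn ℝ (Icc c d) f) (hcont : ContinuousOn f (Icc c d)) :
    (d - c) * f ((c + d) / 2) ≤ ∫ x in c..d, f x := by
  rcases hcd.eq_or_lt with rfl | hcd
  · simp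
  have hsub : Ι c d ⊆ Icc c d := by rw [uIoc_of_le hcd.le]; exact Ioc_subset_Icc_self
  have hjensen := hconv.map_set_average_le hcont isClosed_Icc (μ := volume) (t := Ι c d)
    (f := id) (by simp [uIoc_of_le hcd.le, hcd]) (by simp [uIoc_of_le hcd.le])
    (ae_restrict_of_forall_mem measurableSet_uIoc hsub)
    continuous_id.integrableOn_uIoc (hcont.integrableOn_Icc.mono_set hsub)
  have hmean : (d - c)⁻¹ * ((d ^ 2 - c ^ 2) / 2) = (c + d) / 2 := by
    field_simp [sub_ne_zero.2 hcd.ne']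
    ring
  simp only [id, interval_average_eq, integral_id, smul_eq_mul, hmean] at hjensen
  exact (le_inv_mul_iff₀ (sub_pos.2 hcd)).1 hjensen

theorem Finset.sum_range_two_mul {M : Type*} [AddCommMonoid M] (g : ℕ → M) (n : ℕ) :
    ∑ j ∈ Finset.range (2 * n), g j = ∑ i ∈ Finset.range n, (g (2 * i) + g (2 * i + 1)) := by
  induction n with
  | zero => simp
  | succ n ih =>
    rw [show 2 * (n + 1) = 2 * n + 1 + 1 by ring, Finset.sum_range_succ, Finset.sum_range_succ,
      Finset.sum_range_succ, ih, add_assoc]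

theorem sum_trapezoid_weights_mul {m : ℕ} (hm : m ≠ 0) (F : ℕ → ℝ) :
    ∑ i ∈ Finset.range (m + 1), (if i = 0 ∨ i = m then (1 : ℝ) / 2 else 1) * F i =
      ∑ i ∈ Finset.range m, (F i + F (i + 1)) / 2 := by
  obtain ⟨k, rfl⟩ := Nat.exists_eq_succ_of_ne_zero hm
  have hinterior : ∀ i ∈ Finset.range k,
      (if i + 1 = 0 ∨ i + 1 = k + 1 then (1 : ℝ) / 2 else 1) * F (i + 1) = F (i + 1) := by
    intro i hi
    rw [if_neg (by simp at hi; omega), one_mul]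
  rw [Finset.sum_range_succ, Finset.sum_range_succ', Finset.sum_congr rfl hinterior,
    ← Finset.sum_div, Finset.sum_add_distrib, Finset.sum_range_succ', Finset.sum_range_succ]
  simp
  ring

noncomputable def midRule (a b : ℝ) (n : ℕ) (f : ℝ → ℝ) : ℝ :=
  ((b - a) / n) * ∑ i ∈ Finset.range n, f (a + (i + 1 / 2) * ((b - a) / n))

noncomputable def gridPoint (a b : ℝ) (n i : ℕ) : ℝ :=
  a + i * ((b - a) / n)

section Grid

variable {a b : ℝ} {n : ℕ} {f : ℝ → ℝ}

theorem gridPoint_zero : gridPoint a b n 0 = a := by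
  simp [gridPoint]

theorem gridPoint_self (hn : n ≠ 0) : gridPoint a b n n = b := by
  have hn' : (n : ℝ) ≠ 0 := Nat.cast_ne_zero.2 hn
  simp only [gridPoint]
  field_simp
  ring

theorem gridPoint_succ_sub (i : ℕ) : gridPoint a b n (i + 1) - gridPoint a b n i = (b - a) / n := by
  simp only [gridPoint]
  push_cast
  ring

theorem gridPoint_two_mul (i : ℕ) : gridPoint a b (2 * n) (2 * i) = gridPoint a b n i := by
  simp only [gridPoint]
  push_cast
  rw [mul_comm 2 (n : ℝ), ← div_div]
  ring

theorem gridPoint_two_mul_add_one (i : ℕ) :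
    gridPoint a b (2 * n) (2 * i + 1) = (gridPoint a b n i + gridPoint a b n (i + 1)) / 2 := by
  simp only [gridPoint]
  push_cast
  rw [mul_comm 2 (n : ℝ), ← div_div]
  ring

theorem gridPoint_mono (hab : a ≤ b) : Monotone (gridPoint a b n) := fun i j hij => by
  have hstep : 0 ≤ (b - a) / n := div_nonneg (sub_nonneg.2 hab) n.cast_nonneg
  unfold gridPoint
  gcongr

theorem gridPoint_mem_Icc (hab : a ≤ b) {i : ℕ} (hi : i ≤ n) : gridPoint a b n i ∈ Icc a b := by
  rcases Nat.eq_zero_or_pos n with rfl | hn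
  · obtain rfl := Nat.le_zero.1 hi
    simpa [gridPoint_zero] using hab
  have hlow := gridPoint_mono (n := n) hab (Nat.zero_le i)
  have hhigh := gridPoint_mono (n := n) hab hi
  rw [gridPoint_zero] at hlow
  rw [gridPoint_self hn.ne'] at hhigh
  exact ⟨hlow, hhigh⟩

theorem Icc_gridPoint_subset (hab : a ≤ b) {i : ℕ} (hi : i < n) :
    Icc (gridPoint a b n i) (gridPoint a b n (i + 1)) ⊆ Icc a b :=
  Icc_subset_Icc (gridPoint_mem_Icc hab hi.le).1 (gridPoint_mem_Icc hab hi).2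

theorem trapRule_eq_sum (hn : n ≠ 0) :
    trapRule a b n f = ∑ i ∈ Finset.range n, (gridPoint a b n (i + 1) - gridPoint a b n i) *
      ((f (gridPoint a b n i) + f (gridPoint a b n (i + 1))) / 2) := by
  simp only [gridPoint_succ_sub, ← Finset.mul_sum]
  exact congrArg _ (sum_trapezoid_weights_mul hn fun i => f (gridPoint a b n i))

theorem midRule_eq_sum :
    midRule a b n f = ∑ i ∈ Finset.range n, (gridPoint a b n (i + 1) - gridPoint a b n i) *
      f ((gridPoint a b n i + gridPoint a b n (i + 1)) / 2) := by
  simp only [midRule, gridPoint_succ_sub, ← Finset.mul_sum]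
  refine congrArg _ (Finset.sum_congr rfl fun i _ => congrArg f ?_)
  simp only [gridPoint]
  push_cast
  ring

theorem trapRule_two_mul (hn : n ≠ 0) :
    trapRule a b (2 * n) f = (trapRule a b n f + midRule a b n f) / 2 := by
  rw [trapRule_eq_sum (mul_ne_zero two_ne_zero hn), trapRule_eq_sum hn, midRule_eq_sum,
    Finset.sum_range_two_mul, ← Finset.sum_add_distrib, Finset.sum_div]
  refine Finset.sum_congr rfl fun i _ => ?_
  rw [show 2 * i + 1 + 1 = 2 * (i + 1) by ring, gridPoint_two_mul, gridPoint_two_mul,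
    gridPoint_two_mul_add_one]
  ring

theorem integral_eq_sum_gridPoint (hab : a ≤ b) (hn : n ≠ 0)
    (hf : IntervalIntegrable f volume a b) :
    ∫ x in a..b, f x =
      ∑ i ∈ Finset.range n, ∫ x in gridPoint a b n i..gridPoint a b n (i + 1), f x := by
  rw [sum_integral_adjacent_intervals fun i hi => hf.mono_set ?_, gridPoint_zero, gridPoint_self hn]
  rw [uIcc_of_le hab, uIcc_of_le (gridPoint_mono hab i.le_succ)]
  exact Icc_gridPoint_subset hab hi

theorem integral_le_trapRule (hab : a ≤ b) (hn : n ≠ 0) (hconv : ConvexOn ℝ (Icc a b) f)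
    (hcont : ContinuousOn f (Icc a b)) : ∫ x in a..b, f x ≤ trapRule a b n f := by
  rw [integral_eq_sum_gridPoint hab hn (hcont.intervalIntegrable_of_Icc hab), trapRule_eq_sum hn]
  refine Finset.sum_le_sum fun i hi => ?_
  have hcell := Icc_gridPoint_subset hab (Finset.mem_range.1 hi)
  exact (hconv.subset hcell (convex_Icc _ _)).intervalIntegral_le_trapezoid
    (gridPoint_mono hab i.le_succ) (hcont.mono hcell)

theorem midRule_le_integral (hab : a ≤ b) (hn : n ≠ 0) (hconv : ConvexOn ℝ (Icc a b) f)
    (hcont : ContinuousOn f (Icc a b)) : midRule a b n f ≤ ∫ x in a..b, f x := by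
  rw [integral_eq_sum_gridPoint hab hn (hcont.intervalIntegrable_of_Icc hab), midRule_eq_sum]
  refine Finset.sum_le_sum fun i hi => ?_
  have hcell := Icc_gridPoint_subset hab (Finset.mem_range.1 hi)
  exact (hconv.subset hcell (convex_Icc _ _)).midpoint_le_intervalIntegral
    (gridPoint_mono hab i.le_succ) (hcont.mono hcell)

end Grid

/-- A posteriori error estimate for the trapezium rule and convex integrands:
`|R[Q_{2n}^{Tr}; f]| ≤ |Q_n^{Tr}[f] - Q_{2n}^{Tr}[f]|`. -/
theorem trapRule_aposteriori (a b : ℝ) (hab : a < b) (n : ℕ) (hn : 0 < n)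
    (f : ℝ → ℝ) (hconv : ConvexOn ℝ (Set.Icc a b) f)
    (hcont : ContinuousOn f (Set.Icc a b)) :
    |(∫ x in a..b, f x) - trapRule a b (2 * n) f| ≤
      |trapRule a b n f - trapRule a b (2 * n) f| := by
  have hupper := integral_le_trapRule (n := 2 * n) hab.le (by positivity) hconv hcont
  have hlower := midRule_le_integral hab.le hn.ne' hconv hcont
  have hrefine := trapRule_two_mul (a := a) (b := b) (f := f) hn.ne'
  rw [abs_of_nonpos (by linarith), abs_of_nonneg (by linarith)]
  linarith
end

section
/- For t, τ ∈ [a, a+h], h = (b-a)/(2n), t_1 = a+h, the function φ(t,τ) = ((t-a)(τ-a)/4)·[tτ - b(t+τ) + t_1(2b - t_1) - c(4n-3)h^2] is nonpositive on [a, a+h]^2 if and only if c ≥ (4n-1)/(4n-3); in particular the bracket attains its maximum on the square at (t,τ) = (a,a), where it equals (4n-1-(4n-3)c) h^2. -/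
/-!
The bracket `B(t, τ) = tτ - b(t + τ) + K` satisfies
`B(a, a) - B(t, τ) = (b - t)(τ - a) + (b - a)(t - a)`, so on `[a, a + h]²` (with `a + h ≤ b`) it is
largest at the corner `(a, a)`; there, with `b - a = 2nh` and `t₁ = a + h`, it equals
`(4n - 1 - (4n - 3)c)h²`. Since the prefactor `(t - a)(τ - a)/4` is nonnegative, `φ ≤ 0` follows from
`B(a, a) ≤ 0`. Conversely, if `B(a, a) > 0` then by continuity `B(t, t) > 0` for `t` slightly above `a`,
where the prefactor is positive.
-/

open Filter Topology Set

theorem bracket_le_corner {a b t τ : ℝ} (hat : a ≤ t) (htb : t ≤ b) (haτ : a ≤ τ) :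
    t * τ - b * (t + τ) ≤ a * a - b * (a + a) := by
  have hgap : a * a - b * (a + a) - (t * τ - b * (t + τ)) = (b - t) * (τ - a) + (b - a) * (t - a) := by
    ring
  have hb : 0 ≤ (b - t) * (τ - a) + (b - a) * (t - a) :=
    add_nonneg (mul_nonneg (sub_nonneg.2 htb) (sub_nonneg.2 haτ))
      (mul_nonneg (sub_nonneg.2 (hat.trans htb)) (sub_nonneg.2 hat))
  linarith

theorem exists_mem_Ioc_bracket_diag_pos {a b h K : ℝ} (hh : 0 < h)
    (hK : 0 < a * a - b * (a + a) + K) :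
    ∃ t ∈ Ioc a (a + h), 0 < t * t - b * (t + t) + K := by
  have hcont : Continuous fun t : ℝ => t * t - b * (t + t) + K := by fun_prop
  have hpos : ∀ᶠ t in 𝓝[>] a, 0 < t * t - b * (t + t) + K :=
    nhdsWithin_le_nhds (hcont.continuousAt.eventually (lt_mem_nhds hK))
  have hIoc : Ioc a (a + h) ∈ 𝓝[>] a := Ioc_mem_nhdsGT (by linarith)
  obtain ⟨t, htK, ht⟩ := (hpos.and hIoc).exists
  exact ⟨t, ht, htK⟩

theorem weighted_bracket_nonpos_iff {a b h K : ℝ} (hh : 0 < h) (hhb : a + h ≤ b) :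
    (∀ t ∈ Icc a (a + h), ∀ τ ∈ Icc a (a + h),
        ((t - a) * (τ - a) / 4) * (t * τ - b * (t + τ) + K) ≤ 0) ↔
      a * a - b * (a + a) + K ≤ 0 := by
  constructor
  · intro H
    by_contra! hK
    obtain ⟨t, ⟨hat, hth⟩, htK⟩ := exists_mem_Ioc_bracket_diag_pos hh hK
    have hweight : 0 < (t - a) * (t - a) / 4 := by
      have := sub_pos.2 hat
      positivity
    exact (H t ⟨hat.le, hth⟩ t ⟨hat.le, hth⟩).not_gt (mul_pos hweight htK)
  · rintro hK t ⟨hat, hth⟩ τ ⟨haτ, -⟩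
    have hweight : 0 ≤ (t - a) * (τ - a) / 4 :=
      div_nonneg (mul_nonneg (sub_nonneg.2 hat) (sub_nonneg.2 haτ)) zero_le_four
    have hcorner := bracket_le_corner hat (hth.trans hhb) haτ
    exact mul_nonpos_of_nonneg_of_nonpos hweight (by linarith)

theorem Splus_first_cell_general (a b : ℝ) (hab : a < b) (n : ℕ) (hn : 0 < n)
    (c : ℝ) :
    a * a - b * (a + a) + (a + (b - a) / (2 * n)) * (2 * b - (a + (b - a) / (2 * n)))
        - c * (4 * n - 3) * ((b - a) / (2 * n)) ^ 2 =
      (4 * (n : ℝ) - 1 - (4 * n - 3) * c) * ((b - a) / (2 * n)) ^ 2 ∧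
    ((∀ t ∈ Set.Icc a (a + (b - a) / (2 * n)),
        ∀ τ ∈ Set.Icc a (a + (b - a) / (2 * n)),
        ((t - a) * (τ - a) / 4) *
          (t * τ - b * (t + τ) +
            (a + (b - a) / (2 * n)) * (2 * b - (a + (b - a) / (2 * n))) -
            c * (4 * n - 3) * ((b - a) / (2 * n)) ^ 2) ≤ 0) ↔
      (4 * (n : ℝ) - 1) / (4 * n - 3) ≤ c) := by
  have hn1 : (1 : ℝ) ≤ n := by exact_mod_cast hn
  set h := (b - a) / (2 * (n : ℝ))
  have hh : 0 < h := div_pos (by linarith) (by linarith)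
  have hba : b - a = 2 * n * h := (mul_div_cancel₀ _ (by positivity)).symm
  have hcorner : a * a - b * (a + a) + (a + h) * (2 * b - (a + h)) - c * (4 * n - 3) * h ^ 2 =
      (4 * (n : ℝ) - 1 - (4 * n - 3) * c) * h ^ 2 := by
    linear_combination 2 * h * hba
  refine ⟨hcorner, ?_⟩
  simp only [add_sub_assoc]
  rw [weighted_bracket_nonpos_iff hh (by nlinarith), ← add_sub_assoc, hcorner,
    ← zero_mul (h ^ 2), mul_le_mul_iff_of_pos_right (by positivity), div_le_iff₀ (by linarith)]
  constructor <;> intro <;> linarith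

/-- The vertex argument on `Δ_{0,0}^1` for `S_n^+`: with `h = (b-a)/(2n)`,
`t_1 = a + h`, `φ(t,τ) = ((t-a)(τ-a)/4)[tτ - b(t+τ) + t_1(2b-t_1) - c(4n-3)h^2]`
is nonpositive on `[a, a+h]^2` iff `c ≥ (4n-1)/(4n-3)`; the bracket at `(a,a)`
equals `(4n-1-(4n-3)c)h^2`. -/
theorem Splus_first_cell (a b : ℝ) (hab : a < b) (n : ℕ) (hn : 0 < n)
    (c : ℝ) (hc : 0 < c) :
    a * a - b * (a + a) + (a + (b - a) / (2 * n)) * (2 * b - (a + (b - a) / (2 * n)))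
        - c * (4 * n - 3) * ((b - a) / (2 * n)) ^ 2 =
      (4 * (n : ℝ) - 1 - (4 * n - 3) * c) * ((b - a) / (2 * n)) ^ 2 ∧
    ((∀ t ∈ Set.Icc a (a + (b - a) / (2 * n)),
        ∀ τ ∈ Set.Icc a (a + (b - a) / (2 * n)),
        ((t - a) * (τ - a) / 4) *
          (t * τ - b * (t + τ) +
            (a + (b - a) / (2 * n)) * (2 * b - (a + (b - a) / (2 * n))) -
            c * (4 * n - 3) * ((b - a) / (2 * n)) ^ 2) ≤ 0) ↔
      (4 * (n : ℝ) - 1) / (4 * n - 3) ≤ c) :=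
  Splus_first_cell_general a b hab n hn c
end
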